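/- Let F be a complete nonarchimedean normed field and a ∈ F with 0 < ‖a‖ < 1. Let c₀(F) denote the space of sequences x : ℕ → F with x_n → 0. Define T : c₀(F) → c₀(F) by (Tx)_n = −n·x_n − a^{−1}·x_{n+1}. Then T is a well-defined F-linear map, it is surjective, and its kernel equals the set of sequences x with x_n = 0 for all n ≥ 1. -/

import Mathlib

/-!
Since `‖n‖ ≤ 1` in an ultrametric field, `(n * x n)` is null whenever `x` is, so `T` preserves
`c₀`. The equation `T x = b` is the recurrence `x (n + 1) = -a * (b n + n * x n)`; starting it
at `x 0 = 0` gives `‖x (n + 1)‖ ≤ ‖a‖ * max ‖b n‖ ‖x n‖`, and a contraction factor `‖a‖ < 1`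
against an input tending to zero forces `x n → 0`. For `b = 0` the recurrence gives `x 1 = 0`,
which then propagates to all `n ≥ 1`.
-/

open Filter Topology

theorem le_max_pow_mul_of_le_mul_max {u v : ℕ → ℝ} {r ε : ℝ} {N : ℕ} (hr0 : 0 ≤ r)
    (hr1 : r ≤ 1) (hε : 0 ≤ ε) (hv : ∀ n ≥ N, v n ≤ ε)
    (h : ∀ n, u (n + 1) ≤ r * max (v n) (u n)) :
    ∀ n ≥ N, u n ≤ max (r ^ (n - N) * u N) ε := by
  intro n hn
  induction n, hn using Nat.le_induction with
  | base => simp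
  | succ n hn ih =>
    calc u (n + 1) ≤ r * max (v n) (u n) := h n
      _ ≤ r * max (r ^ (n - N) * u N) ε :=
          mul_le_mul_of_nonneg_left (max_le ((hv n hn).trans (le_max_right _ _)) ih) hr0
      _ = max (r ^ (n + 1 - N) * u N) (r * ε) := by
          rw [mul_max_of_nonneg _ _ hr0, Nat.sub_add_comm hn, pow_succ]; ring_nf
      _ ≤ max (r ^ (n + 1 - N) * u N) ε := max_le_max le_rfl (mul_le_of_le_one_left hε hr1)

theorem tendsto_zero_of_le_mul_max {u v : ℕ → ℝ} {r : ℝ} (hu : ∀ n, 0 ≤ u n) (hr0 : 0 ≤ r)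
    (hr1 : r < 1) (hv : Tendsto v atTop (𝓝 0)) (h : ∀ n, u (n + 1) ≤ r * max (v n) (u n)) :
    Tendsto u atTop (𝓝 0) := by
  refine tendsto_order.2 ⟨fun c hc => Eventually.of_forall fun n => hc.trans_le (hu n),
    fun ε hε => ?_⟩
  obtain ⟨N, hN⟩ := (hv.eventually (eventually_le_nhds (half_pos hε))).exists_forall_of_atTop
  have hbound := le_max_pow_mul_of_le_mul_max hr0 hr1.le (half_pos hε).le hN h
  have hpow : Tendsto (fun n => r ^ (n - N) * u N) atTop (𝓝 0) := by
    simpa using ((tendsto_pow_atTop_nhds_zero_of_lt_one hr0 hr1).comp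
      (tendsto_sub_atTop_nat N)).mul_const (u N)
  filter_upwards [eventually_ge_atTop N, hpow.eventually (eventually_lt_nhds hε)] with n hn hsmall
  exact (hbound n hn).trans_lt (max_lt hsmall (half_lt_self hε))

section Ultrametric

variable {R : Type*} [SeminormedRing R] [NormOneClass R] [IsUltrametricDist R]

theorem norm_natCast_mul_le (n : ℕ) (x : R) : ‖(n : R) * x‖ ≤ ‖x‖ :=
  (norm_mul_le _ _).trans <|
    mul_le_of_le_one_left (norm_nonneg x) (IsUltrametricDist.norm_natCast_le_one R n)

theorem tendsto_natCast_mul_of_tendsto_zero {x : ℕ → R} (hx : Tendsto x atTop (𝓝 0)) :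
    Tendsto (fun n : ℕ => (n : R) * x n) atTop (𝓝 0) :=
  squeeze_zero_norm (fun n => norm_natCast_mul_le n (x n))
    (tendsto_zero_iff_norm_tendsto_zero.1 hx)

end Ultrametric

section SenOperator

variable {F : Type*} [NormedField F] {a : F}

def senOperator (a : F) (x : ℕ → F) (n : ℕ) : F :=
  -(n : F) * x n - a⁻¹ * x (n + 1)

theorem senOperator_eq_iff (ha : a ≠ 0) {x : ℕ → F} {n : ℕ} {b : F} :
    senOperator a x n = b ↔ x (n + 1) = -a * (b + n * x n) := by
  rw [senOperator]
  constructor <;> intro h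
  · rw [← h]; field_simp; ring
  · rw [h]; field_simp; ring

theorem senOperator_eq_zero_iff (ha : a ≠ 0) {x : ℕ → F} :
    (∀ n, senOperator a x n = 0) ↔ ∀ n, 1 ≤ n → x n = 0 := by
  simp only [senOperator_eq_iff ha, zero_add]
  constructor
  · intro h n hn
    induction n, hn using Nat.le_induction with
    | base => simpa using h 0
    | succ n hn ih => rw [h, ih, mul_zero, mul_zero]
  · rintro h (_ | n)
    · simp [h 1 le_rfl]
    · rw [h (n + 1) n.succ_pos, h (n + 1 + 1) (by omega), mul_zero, mul_zero]

theorem tendsto_senOperator [IsUltrametricDist F] {x : ℕ → F}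
    (hx : Tendsto x atTop (𝓝 0)) (a : F) : Tendsto (senOperator a x) atTop (𝓝 0) := by
  have h := (tendsto_natCast_mul_of_tendsto_zero hx).neg.sub
    ((hx.comp (tendsto_add_atTop_nat 1)).const_mul a⁻¹)
  rw [neg_zero, mul_zero, sub_zero] at h
  exact h.congr fun n => by rw [senOperator, neg_mul]; rfl

def senPreimage (a : F) (b : ℕ → F) : ℕ → F
  | 0 => 0
  | n + 1 => -a * (b n + n * senPreimage a b n)

theorem senOperator_senPreimage (ha : a ≠ 0) (b : ℕ → F) :
    senOperator a (senPreimage a b) = b :=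
  funext fun _ => (senOperator_eq_iff ha).2 rfl

theorem norm_senPreimage_succ_le [IsUltrametricDist F] (b : ℕ → F) (n : ℕ) :
    ‖senPreimage a b (n + 1)‖ ≤ ‖a‖ * max ‖b n‖ ‖senPreimage a b n‖ := by
  rw [senPreimage, norm_mul, norm_neg]
  gcongr
  exact (IsUltrametricDist.norm_add_le_max _ _).trans
    (max_le_max le_rfl (norm_natCast_mul_le _ _))

theorem tendsto_senPreimage [IsUltrametricDist F] (ha1 : ‖a‖ < 1) {b : ℕ → F}
    (hb : Tendsto b atTop (𝓝 0)) : Tendsto (senPreimage a b) atTop (𝓝 0) := by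
  rw [tendsto_zero_iff_norm_tendsto_zero] at hb ⊢
  exact tendsto_zero_of_le_mul_max (fun _ => norm_nonneg _) (norm_nonneg a) ha1 hb
    (norm_senPreimage_succ_le b)

end SenOperator

theorem sen_operator_on_null_sequences_general {F : Type*} [NormedField F]
    (hna : IsNonarchimedean (norm : F → ℝ))
    (a : F) (ha0 : 0 < ‖a‖) (ha1 : ‖a‖ < 1) :
    -- well-definedness: `T` maps null sequences to null sequences
    (∀ x : ℕ → F, Tendsto x atTop (nhds 0) →
        Tendsto (fun n : ℕ => -(n : F) * x n - a⁻¹ * x (n + 1)) atTop (nhds 0)) ∧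
    -- `F`-linearity of `T`
    (∀ (c : F) (x y : ℕ → F),
        (fun n : ℕ => -(n : F) * (c * x n + y n) - a⁻¹ * (c * x (n + 1) + y (n + 1)))
          = fun n : ℕ => c * (-(n : F) * x n - a⁻¹ * x (n + 1)) +
              (-(n : F) * y n - a⁻¹ * y (n + 1))) ∧
    -- surjectivity of `T` on null sequences
    (∀ b : ℕ → F, Tendsto b atTop (nhds 0) →
        ∃ x : ℕ → F, Tendsto x atTop (nhds 0) ∧
          ∀ n : ℕ, -(n : F) * x n - a⁻¹ * x (n + 1) = b n) ∧
    -- kernel of `T`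
    (∀ x : ℕ → F, Tendsto x atTop (nhds 0) →
        ((∀ n : ℕ, -(n : F) * x n - a⁻¹ * x (n + 1) = 0) ↔ ∀ n : ℕ, 1 ≤ n → x n = 0)) := by
  have := IsUltrametricDist.isUltrametricDist_of_isNonarchimedean_norm hna
  have ha : a ≠ 0 := norm_pos_iff.1 ha0
  refine ⟨fun x hx => tendsto_senOperator hx a, fun c x y => ?_,
    fun b hb => ⟨senPreimage a b, tendsto_senPreimage ha1 hb,
      congrFun (senOperator_senPreimage ha b)⟩,
    fun x _ => senOperator_eq_zero_iff ha⟩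
  funext n
  ring

/-- Let `F` be a complete nonarchimedean normed field and `a ∈ F` with `0 < ‖a‖ < 1`.
On the space `c₀(F)` of null sequences, the map `T` given by
`(Tx)_n = −n·x n − a⁻¹·x (n+1)` is a well-defined `F`-linear map, it is surjective,
and its kernel is the set of sequences vanishing in all degrees `n ≥ 1`. -/
theorem sen_operator_on_null_sequences {F : Type*} [NormedField F] [CompleteSpace F]
    (hna : IsNonarchimedean (norm : F → ℝ))
    (a : F) (ha0 : 0 < ‖a‖) (ha1 : ‖a‖ < 1) :
    -- well-definedness: `T` maps null sequences to null sequences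
    (∀ x : ℕ → F, Tendsto x atTop (nhds 0) →
        Tendsto (fun n : ℕ => -(n : F) * x n - a⁻¹ * x (n + 1)) atTop (nhds 0)) ∧
    -- `F`-linearity of `T`
    (∀ (c : F) (x y : ℕ → F),
        (fun n : ℕ => -(n : F) * (c * x n + y n) - a⁻¹ * (c * x (n + 1) + y (n + 1)))
          = fun n : ℕ => c * (-(n : F) * x n - a⁻¹ * x (n + 1)) +
              (-(n : F) * y n - a⁻¹ * y (n + 1))) ∧
    -- surjectivity of `T` on null sequences
    (∀ b : ℕ → F, Tendsto b atTop (nhds 0) →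
        ∃ x : ℕ → F, Tendsto x atTop (nhds 0) ∧
          ∀ n : ℕ, -(n : F) * x n - a⁻¹ * x (n + 1) = b n) ∧
    -- kernel of `T`
    (∀ x : ℕ → F, Tendsto x atTop (nhds 0) →
        ((∀ n : ℕ, -(n : F) * x n - a⁻¹ * x (n + 1) = 0) ↔ ∀ n : ℕ, 1 ≤ n → x n = 0)) :=
  sen_operator_on_null_sequences_general hna a ha0 ha1
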